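/- Let F be a characteristic-zero differential field whose field of constants is algebraically closed, and let E ⊇ F be a differential field extension. If e ∈ E is nonzero and e′/e ∈ F, then either e is transcendental over F or there exists a positive integer n such that e^n ∈ F. -/

import Mathlib

/-!
If `e` is algebraic over `F` with minimal polynomial `p = X ^ n + ⋯ + a₀`, differentiating
`p(e) = 0` with `e′ = t e` shows that `∑ (aₖ′ + (k - n) t aₖ) eᵏ = 0`, a relation of degree `< n`,
so every coefficient vanishes; for `k = 0` this says `a₀′ = n t a₀`, i.e. `eⁿ / a₀` is a constant.
A constant algebraic over `F` has a minimal polynomial with constant coefficients (the same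
argument with `t = 0`), hence lies in the algebraically closed constant field of `F`.
Therefore `eⁿ ∈ a₀ · F = F`.
-/

/-- A derivation on a field: an additive map satisfying the Leibniz rule. -/
structure IsDerivation {E : Type*} [Field E] (D : E → E) : Prop where
  map_add : ∀ a b : E, D (a + b) = D a + D b
  leibniz : ∀ a b : E, D (a * b) = D a * b + a * D b

open Polynomial Differential

namespace IsDerivation

variable {E : Type*} [Field E] {D : E → E}

def toDerivation (hD : IsDerivation D) : Derivation ℤ E E :=
  Derivation.mk' (AddMonoidHom.mk' D hD.map_add).toIntLinearMap fun a b => by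
    simp only [AddMonoidHom.coe_toIntLinearMap, AddMonoidHom.mk'_apply, hD.leibniz, smul_eq_mul]
    ring

theorem restrict (hD : IsDerivation D) {F : Subfield E} (hF : ∀ a ∈ F, D a ∈ F) :
    IsDerivation fun a : F => (⟨D a, hF a a.2⟩ : F) where
  map_add a b := Subtype.ext (hD.map_add a b)
  leibniz a b := Subtype.ext (hD.leibniz a b)

end IsDerivation

theorem Polynomial.coeff_X_mul_derivative {R : Type*} [Semiring R] (p : R[X]) (m : ℕ) :
    (X * derivative p).coeff m = m * p.coeff m := by
  cases m with
  | zero => simp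
  | succ m => rw [coeff_X_mul, coeff_derivative, ← Nat.cast_succ, Nat.cast_comm]

theorem Differential.deriv_pow_div_eq_zero {L : Type*} [Field L] [Differential L] {x a t : L}
    {n : ℕ} (hx : x ≠ 0) (ha : a ≠ 0) (hx' : logDeriv x = t) (ha' : logDeriv a = n * t) :
    (x ^ n / a)′ = 0 := by
  rw [← logDeriv_eq_zero, logDeriv_div _ _ (pow_ne_zero n hx) ha, logDeriv_pow, hx', ha', sub_self]

section

variable {K L : Type*} [Field K] [Field L] [Differential K] [Differential L] [Algebra K L]
  [DifferentialAlgebra K L]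

theorem minpoly_coeff_deriv_of_deriv_eq_mul {x : L} {t : K} (hx : IsIntegral K x)
    (hx' : x′ = algebraMap K L t * x) (m : ℕ) :
    ((minpoly K x).coeff m)′ = ((minpoly K x).natDegree - m : K) * t * (minpoly K x).coeff m := by
  set p := minpoly K x
  have hp_monic : p.Monic := minpoly.monic hx
  have hp : aeval x p = 0 := minpoly.aeval K x
  have hp_min {q : K[X]} (hq : q ≠ 0) (hqx : aeval x q = 0) : p.degree ≤ q.degree :=
    minpoly.degree_le_of_ne_zero K x hq hqx
  clear_value p
  -- `q(x) = (p(x))′ - n t p(x)`, and the `Xⁿ`-coefficient of `q` cancels because `p` is monic.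
  set q := mapCoeffs p + C t * X * derivative p - C (p.natDegree * t : K) * p
  have hq_coeff (m : ℕ) : q.coeff m = (p.coeff m)′ - (p.natDegree - m : K) * t * p.coeff m := by
    simp only [q, coeff_sub, coeff_add, coeff_mapCoeffs, mul_assoc, coeff_C_mul,
      coeff_X_mul_derivative]
    ring
  have hq_aeval : aeval x q = 0 := by
    have h := deriv_aeval_eq x p
    rw [hp, map_zero, hx'] at h
    simp only [q, map_sub, map_add, map_mul, aeval_C, aeval_X, hp, mul_zero, sub_zero]
    linear_combination -h
  have hq_deg : q.degree < p.degree := by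
    rw [degree_eq_natDegree hp_monic.ne_zero, degree_lt_iff_coeff_zero]
    intro m hm
    rw [hq_coeff]
    rcases hm.eq_or_lt with rfl | hlt
    · simp [hp_monic.coeff_natDegree]
    · simp [coeff_eq_zero_of_natDegree_lt hlt]
  have hq : q = 0 := by
    by_contra hq
    exact hq_deg.not_ge (hp_min hq hq_aeval)
  simpa [hq, sub_eq_zero] using (hq_coeff m).symm

theorem mem_of_isIntegral_of_deriv_eq_zero (C : Subfield L) [IsAlgClosed C]
    (hC : ∀ a : K, a′ = 0 → algebraMap K L a ∈ C) {x : L} (hx : IsIntegral K x) (hx' : x′ = 0) :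
    x ∈ C := by
  have hcoeff (m : ℕ) : ((minpoly K x).coeff m)′ = 0 := by
    simpa [hx'] using minpoly_coeff_deriv_of_deriv_eq_mul (t := 0) hx (by simp [hx']) m
  obtain ⟨q, hq_map, -, hq_monic⟩ := lifts_and_degree_eq_and_monic (f := C.subtype)
    ((lifts_iff_coeff_lifts _).2 fun m => by simpa [coeff_map] using hC _ (hcoeff m))
    ((minpoly.monic hx).map (algebraMap K L))
  have hxC : IsIntegral C x := ⟨q, hq_monic, by
    rw [← eval_map, show algebraMap C L = C.subtype from rfl, hq_map, eval_map_algebraMap,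
      minpoly.aeval]⟩
  obtain ⟨y, rfl⟩ := minpoly.degree_eq_one_iff.1
    (IsAlgClosed.degree_eq_one_of_irreducible C (minpoly.irreducible hxC))
  exact y.2

end

theorem exponential_transcendental_or_power_mem_general
    {E : Type*} [Field E]
    (D : E → E) (hD : IsDerivation D)
    (F : Subfield E) (hF : ∀ a ∈ F, D a ∈ F)
    (C : Subfield E) (hC : ∀ c : E, c ∈ C ↔ (c ∈ F ∧ D c = 0))
    [IsAlgClosed C]
    (e : E) (he0 : e ≠ 0) (he : D e / e ∈ F) :
    Transcendental F e ∨ ∃ n : ℕ, 0 < n ∧ e ^ n ∈ F := by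
  let _ : Differential E := ⟨hD.toDerivation⟩
  let _ : Differential F := ⟨(hD.restrict hF).toDerivation⟩
  have : DifferentialAlgebra F E := ⟨fun _ => rfl⟩
  refine or_iff_not_imp_left.mpr fun halg => ?_
  have hint : IsIntegral F e := (not_not.mp halg).isIntegral
  set n := (minpoly F e).natDegree
  set a := (minpoly F e).coeff 0
  have ha : (a : E) ≠ 0 := by exact_mod_cast minpoly.coeff_zero_ne_zero hint he0
  have he' : e′ = algebraMap F E ⟨D e / e, he⟩ * e := (div_mul_cancel₀ _ he0).symm
  have ha' : logDeriv (a : E) = n * (D e / e) := by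
    have h := congrArg ((↑) : F → E) (minpoly_coeff_deriv_of_deriv_eq_mul hint he' 0)
    simp only [Nat.cast_zero, sub_zero, Subfield.coe_mul, SubringClass.coe_natCast] at h
    rw [Differential.logDeriv, div_eq_iff ha]
    exact h
  have hc_int : IsIntegral F (e ^ n / a) := by
    rw [div_eq_mul_inv, ← Subfield.coe_inv]
    exact (hint.pow n).mul (isIntegral_algebraMap (x := a⁻¹))
  have hc : e ^ n / a ∈ C :=
    mem_of_isIntegral_of_deriv_eq_zero C (fun b hb => (hC _).2 ⟨b.2, congrArg Subtype.val hb⟩)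
      hc_int (deriv_pow_div_eq_zero he0 ha rfl ha')
  refine ⟨n, minpoly.natDegree_pos hint, ?_⟩
  simpa [div_mul_cancel₀ _ ha] using mul_mem ((hC _).1 hc).1 a.2

/-- Let `F` be a characteristic-zero differential field whose field of constants is
algebraically closed, and let `E ⊇ F` be a differential field extension.  If `e ∈ E`
is nonzero and `e'/e ∈ F`, then either `e` is transcendental over `F` or some positive
power `e^n` lies in `F`. -/
theorem exponential_transcendental_or_power_mem
    {E : Type*} [Field E] [CharZero E]
    (D : E → E) (hD : IsDerivation D)
    (F : Subfield E) (hF : ∀ a ∈ F, D a ∈ F)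
    (C : Subfield E) (hC : ∀ c : E, c ∈ C ↔ (c ∈ F ∧ D c = 0))
    [IsAlgClosed C]
    (e : E) (he0 : e ≠ 0) (he : D e / e ∈ F) :
    Transcendental F e ∨ ∃ n : ℕ, 0 < n ∧ e ^ n ∈ F :=
  exponential_transcendental_or_power_mem_general D hD F hF C hC e he0 he
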